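/- arXiv:2207.03921 — 3 statements merged into one kernel-verified Lean document; each statement's English description precedes it below -/
import Mathlib

section
/- Let d, n ≥ 1, let Ω, Ω_D ⊆ ℝ^d be disjoint Lebesgue-measurable sets with Ω̃ := Ω ∪ Ω_D, let C : ℝ^d × ℝ^d → ℝ^{n×n} and u, v : ℝ^d → ℝ^n be measurable with v(x) = 0 for all x ∈ Ω_D, and define h(x,y) := C(x,y)u(x) − C(y,x)u(y). Assume (x,y) ↦ (v(x) − v(y))ᵀ h(x,y) is Lebesgue integrable on Ω̃ × Ω̃ and (x,y) ↦ v(x)ᵀ C(x,y)u(x) and (x,y) ↦ v(x)ᵀ C(y,x)u(y) are Lebesgue integrable on Ω × Ω_D. Then ∫_{Ω̃} ∫_{Ω̃} (v(x) − v(y))ᵀ h(x,y) dy dx = A_{ΩΩ}(u,v) + A_{ΩΩ_D}(g,v), where g := u restricted to Ω_D, A_{ΩΩ}(u,v) := ∫_Ω ∫_Ω (v(x) − v(y))ᵀ h(x,y) dy dx + 2 ∫_Ω ∫_{Ω_D} v(x)ᵀ C(x,y) u(x) dy dx, and A_{ΩΩ_D}(g,v) := −2 ∫_Ω ∫_{Ω_D}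 v(x)ᵀ C(y,x) g(y) dy dx. -/
open MeasureTheory Matrix

set_option maxHeartbeats 1000000

lemma setIntegral_prod_swap' {α : Type*} [MeasurableSpace α]
    {μ : Measure α} [SFinite μ] (s t : Set α) (f : α × α → ℝ) :
    ∫ p in s ×ˢ t, f p ∂(μ.prod μ) = ∫ p in t ×ˢ s, f p.swap ∂(μ.prod μ) := by
  rw [← Measure.prod_restrict s t, ← Measure.prod_restrict t s,
    integral_prod_swap]

/-- splitting of the nonlocal bilinear form to treat inhomogeneous
Dirichlet volume constraints: `A(u,v) = A_{ΩΩ}(u,v) + A_{ΩΩ_D}(g,v)` for test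
functions `v` vanishing on the Dirichlet domain `Ω_D`, with `g = u|_{Ω_D}`. -/
theorem dirichlet_splitting
    (d n : ℕ) (hd : 1 ≤ d) (hn : 1 ≤ n)
    (Ω ΩD : Set (Fin d → ℝ)) (hdisj : Disjoint Ω ΩD)
    (hΩ : MeasurableSet Ω) (hΩD : MeasurableSet ΩD)
    (C : (Fin d → ℝ) → (Fin d → ℝ) → Matrix (Fin n) (Fin n) ℝ)
    (u v : (Fin d → ℝ) → (Fin n → ℝ))
    (hC : ∀ i j, Measurable (fun p : (Fin d → ℝ) × (Fin d → ℝ) => C p.1 p.2 i j))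
    (hu : Measurable u) (hv : Measurable v)
    (hv0 : ∀ x ∈ ΩD, v x = 0)
    (h : (Fin d → ℝ) → (Fin d → ℝ) → (Fin n → ℝ))
    (hdef : ∀ x y, h x y = C x y *ᵥ u x - C y x *ᵥ u y)
    (hint1 : IntegrableOn
      (fun p : (Fin d → ℝ) × (Fin d → ℝ) => (v p.1 - v p.2) ⬝ᵥ h p.1 p.2)
      ((Ω ∪ ΩD) ×ˢ (Ω ∪ ΩD)))
    (hint2 : IntegrableOn
      (fun p : (Fin d → ℝ) × (Fin d → ℝ) => v p.1 ⬝ᵥ (C p.1 p.2 *ᵥ u p.1)) (Ω ×ˢ ΩD))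
    (hint3 : IntegrableOn
      (fun p : (Fin d → ℝ) × (Fin d → ℝ) => v p.1 ⬝ᵥ (C p.2 p.1 *ᵥ u p.2)) (Ω ×ˢ ΩD)) :
    ∫ x in Ω ∪ ΩD, ∫ y in Ω ∪ ΩD, (v x - v y) ⬝ᵥ h x y
      = ((∫ x in Ω, ∫ y in Ω, (v x - v y) ⬝ᵥ h x y)
          + 2 * ∫ x in Ω, ∫ y in ΩD, v x ⬝ᵥ (C x y *ᵥ u x))
        + (-(2 * ∫ x in Ω, ∫ y in ΩD, v x ⬝ᵥ (C y x *ᵥ u y))) := by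
  set f : (Fin d → ℝ) × (Fin d → ℝ) → ℝ :=
    fun p => (v p.1 - v p.2) ⬝ᵥ h p.1 p.2 with hf
  have hsub : ∀ s t : Set (Fin d → ℝ), s ⊆ Ω ∪ ΩD → t ⊆ Ω ∪ ΩD →
      IntegrableOn f (s ×ˢ t) := fun s t hs ht =>
    hint1.mono_set (Set.prod_mono hs ht)
  -- Convert iterated integral to product integral and split
  have key : (∫ x in Ω ∪ ΩD, ∫ y in Ω ∪ ΩD, (v x - v y) ⬝ᵥ h x y)
      = ∫ p in (Ω ∪ ΩD) ×ˢ (Ω ∪ ΩD), f p := (setIntegral_prod f hint1).symm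
  -- integrabilities on pieces
  have iΩΩ := hsub Ω Ω Set.subset_union_left Set.subset_union_left
  have iΩD := hsub Ω ΩD Set.subset_union_left Set.subset_union_right
  have iDΩ := hsub ΩD Ω Set.subset_union_right Set.subset_union_left
  have iDD := hsub ΩD ΩD Set.subset_union_right Set.subset_union_right
  have hsplit : (∫ p in (Ω ∪ ΩD) ×ˢ (Ω ∪ ΩD), f p)
      = (∫ p in Ω ×ˢ Ω, f p) + (∫ p in Ω ×ˢ ΩD, f p)
        + ((∫ p in ΩD ×ˢ Ω, f p) + (∫ p in ΩD ×ˢ ΩD, f p)) := by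
    have iΩT := hsub Ω (Ω ∪ ΩD) Set.subset_union_left (subset_refl _)
    have iDT := hsub ΩD (Ω ∪ ΩD) Set.subset_union_right (subset_refl _)
    rw [Set.union_prod,
      setIntegral_union (Set.disjoint_prod.2 (Or.inl hdisj))
        (hΩD.prod (hΩ.union hΩD)) iΩT iDT,
      Set.prod_union, Set.prod_union,
      setIntegral_union (Set.disjoint_prod.2 (Or.inr hdisj)) (hΩ.prod hΩD) iΩΩ iΩD,
      setIntegral_union (Set.disjoint_prod.2 (Or.inr hdisj)) (hΩD.prod hΩD) iDΩ iDD]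
  -- piece ΩD × ΩD is zero
  have hDD : (∫ p in ΩD ×ˢ ΩD, f p) = 0 := by
    rw [setIntegral_congr_fun (hΩD.prod hΩD)
      (g := fun _ => (0 : ℝ)) ?_, integral_zero]
    rintro ⟨x, y⟩ ⟨hx, hy⟩
    simp [hf, hv0 x hx, hv0 y hy]
  -- piece Ω × ΩD
  have hΩDval : (∫ p in Ω ×ˢ ΩD, f p)
      = (∫ p in Ω ×ˢ ΩD, v p.1 ⬝ᵥ (C p.1 p.2 *ᵥ u p.1))
        - ∫ p in Ω ×ˢ ΩD, v p.1 ⬝ᵥ (C p.2 p.1 *ᵥ u p.2) := by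
    rw [← integral_sub hint2 hint3]
    refine setIntegral_congr_fun (hΩ.prod hΩD) ?_
    rintro ⟨x, y⟩ ⟨hx, hy⟩
    simp only [hf, hdef, hv0 y hy, sub_zero, dotProduct_sub]
  -- piece ΩD × Ω equals the same via swap
  have hDΩval : (∫ p in ΩD ×ˢ Ω, f p)
      = (∫ p in Ω ×ˢ ΩD, v p.1 ⬝ᵥ (C p.1 p.2 *ᵥ u p.1))
        - ∫ p in Ω ×ˢ ΩD, v p.1 ⬝ᵥ (C p.2 p.1 *ᵥ u p.2) := by
    rw [Measure.volume_eq_prod, setIntegral_prod_swap' ΩD Ω f, ← Measure.volume_eq_prod, ← integral_sub hint2 hint3]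
    refine setIntegral_congr_fun (hΩ.prod hΩD) ?_
    rintro ⟨x, y⟩ ⟨hx, hy⟩
    simp only [hf, Prod.swap_prod_mk, hdef, hv0 y hy, zero_sub, neg_dotProduct,
      dotProduct_sub, neg_sub]
    ring
  -- convert product integrals of pieces back to iterated integrals
  have e1 : (∫ p in Ω ×ˢ Ω, f p) = ∫ x in Ω, ∫ y in Ω, (v x - v y) ⬝ᵥ h x y :=
    setIntegral_prod f iΩΩ
  have e2 : (∫ p in Ω ×ˢ ΩD, (fun p : (Fin d → ℝ) × (Fin d → ℝ) =>
      v p.1 ⬝ᵥ (C p.1 p.2 *ᵥ u p.1)) p) = ∫ x in Ω, ∫ y in ΩD, v x ⬝ᵥ (C x y *ᵥ u x) :=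
    setIntegral_prod _ hint2
  have e3 : (∫ p in Ω ×ˢ ΩD, (fun p : (Fin d → ℝ) × (Fin d → ℝ) =>
      v p.1 ⬝ᵥ (C p.2 p.1 *ᵥ u p.2)) p) = ∫ x in Ω, ∫ y in ΩD, v x ⬝ᵥ (C y x *ᵥ u y) :=
    setIntegral_prod _ hint3
  rw [key, hsplit, hDD, hΩDval, hDΩval, e1]
  rw [e2, e3]
  ring
end

section
/- Let δ > 0 and set c_δ^∞ := 3/(4δ⁴). Let u : ℝ² → ℝ be a polynomial of total degree at most 3. Then for every x ∈ ℝ², 2 c_δ^∞ ∫_{{y : |y−x|_∞ ≤ δ}} (u(x) − u(y)) dy = −Δu(x), i.e., the correctly scaled constant-kernel nonlocal diffusion operator with infinity-norm ball truncation coincides with the classical negative Laplacian on polynomials of degree up to three. -/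
/-!
Both sides are linear in `u`, so it suffices to treat monomials `y₀ ^ a * y₁ ^ b` with
`a + b ≤ 3`. The sup-norm ball is the square `[x₀ - δ, x₀ + δ] × [x₁ - δ, x₁ + δ]`, so the
integral of a monomial factorizes. For `n ≤ 3` the Taylor expansion of `tⁿ` about `s` stops
at the cubic term and its odd terms integrate to zero, so
`∫_{s-δ}^{s+δ} tⁿ dt = 2δ sⁿ + (δ³/3) (tⁿ)''(s)` exactly. In the product of the two factors the
term `(t^a)'' (t^b)''` vanishes because `a < 2` or `b < 2`, which leaves
`∫_B (u x - u y) dy = -(2δ⁴/3) Δu(x)`.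
-/

open MeasureTheory

/-- The Laplacian on `ℝ² = Fin 2 → ℝ` (equipped with the sup norm),
as a sum of second directional derivatives. -/
noncomputable def laplacianPi (u : (Fin 2 → ℝ) → ℝ) (x : Fin 2 → ℝ) : ℝ :=
  ∑ i : Fin 2, fderiv ℝ (fun z => fderiv ℝ u z (Pi.single i 1)) x (Pi.single i 1)

open Metric Set

theorem fderiv_mul_comp_eval_apply {f g : ℝ → ℝ} (hf : Differentiable ℝ f)
    (hg : Differentiable ℝ g) (z v : Fin 2 → ℝ) :
    fderiv ℝ (fun z => f (z 0) * g (z 1)) z v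
      = deriv f (z 0) * g (z 1) * v 0 + f (z 0) * deriv g (z 1) * v 1 := by
  have h0 : HasFDerivAt (fun z : Fin 2 → ℝ => f (z 0)) (deriv f (z 0) • .proj 0) z :=
    (hf (z 0)).hasDerivAt.comp_hasFDerivAt z (hasFDerivAt_apply (𝕜 := ℝ) (0 : Fin 2) z)
  have h1 : HasFDerivAt (fun z : Fin 2 → ℝ => g (z 1)) (deriv g (z 1) • .proj 1) z :=
    (hg (z 1)).hasDerivAt.comp_hasFDerivAt z (hasFDerivAt_apply (𝕜 := ℝ) (1 : Fin 2) z)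
  rw [(h0.fun_mul h1).fderiv]
  simp only [add_apply, smul_apply, ContinuousLinearMap.proj_apply, smul_eq_mul]
  ring

theorem laplacianPi_mul_comp_eval {f g : ℝ → ℝ} (hf : ContDiff ℝ 2 f) (hg : ContDiff ℝ 2 g)
    (x : Fin 2 → ℝ) :
    laplacianPi (fun z => f (z 0) * g (z 1)) x
      = iteratedDeriv 2 f (x 0) * g (x 1) + f (x 0) * iteratedDeriv 2 g (x 1) := by
  have hf1 : Differentiable ℝ f := hf.differentiable (by norm_num)
  have hg1 : Differentiable ℝ g := hg.differentiable (by norm_num)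
  have hf2 : Differentiable ℝ (deriv f) := by
    simpa using hf.differentiable_iteratedDeriv 1 (by norm_num)
  have hg2 : Differentiable ℝ (deriv g) := by
    simpa using hg.differentiable_iteratedDeriv 1 (by norm_num)
  have h0 : (fun z : Fin 2 → ℝ =>
      fderiv ℝ (fun z : Fin 2 → ℝ => f (z 0) * g (z 1)) z (Pi.single 0 1))
      = fun z => deriv f (z 0) * g (z 1) := by
    ext z; simp [fderiv_mul_comp_eval_apply hf1 hg1]
  have h1 : (fun z : Fin 2 → ℝ =>
      fderiv ℝ (fun z : Fin 2 → ℝ => f (z 0) * g (z 1)) z (Pi.single 1 1))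
      = fun z => f (z 0) * deriv g (z 1) := by
    ext z; simp [fderiv_mul_comp_eval_apply hf1 hg1]
  simp [laplacianPi, h0, h1, fderiv_mul_comp_eval_apply hf2 hg1,
    fderiv_mul_comp_eval_apply hf1 hg2, iteratedDeriv_succ]

theorem fderiv_sum_const_mul_apply {E ι : Type*} [NormedAddCommGroup E] [NormedSpace ℝ E]
    (s : Finset ι) (c : ι → ℝ) {F : ι → E → ℝ} {x : E}
    (hF : ∀ i ∈ s, DifferentiableAt ℝ (F i) x) (v : E) :
    fderiv ℝ (fun z => ∑ i ∈ s, c i * F i z) x v = ∑ i ∈ s, c i * fderiv ℝ (F i) x v := by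
  rw [fderiv_fun_sum fun i hi => (hF i hi).const_mul (c i), sum_apply]
  refine Finset.sum_congr rfl fun i hi => ?_
  rw [fderiv_const_mul (hF i hi), smul_apply, smul_eq_mul]

theorem laplacianPi_sum_const_mul {ι : Type*} (s : Finset ι) (c : ι → ℝ)
    {F : ι → (Fin 2 → ℝ) → ℝ} (hF : ∀ i ∈ s, ContDiff ℝ 2 (F i)) (x : Fin 2 → ℝ) :
    laplacianPi (fun z => ∑ i ∈ s, c i * F i z) x = ∑ i ∈ s, c i * laplacianPi (F i) x := by
  have hF1 : ∀ i ∈ s, Differentiable ℝ (F i) := fun i hi => (hF i hi).differentiable (by norm_num)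
  have hF2 : ∀ i ∈ s, ∀ v, Differentiable ℝ (fun z => fderiv ℝ (F i) z v) := fun i hi v =>
    ((hF i hi).fderiv_right (m := 1) (by norm_num)).clm_apply contDiff_const |>.differentiable
      (by norm_num)
  simp only [laplacianPi, Finset.mul_sum]
  rw [Finset.sum_comm]
  refine Finset.sum_congr rfl fun j _ => ?_
  have : (fun z => fderiv ℝ (fun z => ∑ i ∈ s, c i * F i z) z (Pi.single j 1))
      = fun z => ∑ i ∈ s, c i * fderiv ℝ (F i) z (Pi.single j 1) :=
    funext fun z => fderiv_sum_const_mul_apply s c (fun i hi => (hF1 i hi).differentiableAt) _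
  rw [this, fderiv_sum_const_mul_apply s c (fun i hi => (hF2 i hi _).differentiableAt)]

theorem setIntegral_pi_closedBall_prod {ι : Type*} [Fintype ι] (f : ι → ℝ → ℝ) (x : ι → ℝ)
    {δ : ℝ} (hδ : 0 ≤ δ) :
    ∫ y in closedBall x δ, ∏ i, f i (y i) = ∏ i, ∫ t in Icc (x i - δ) (x i + δ), f i t := by
  simp only [closedBall_pi x hδ, Real.closedBall_eq_Icc, volume_pi, Measure.restrict_pi_pi,
    integral_fintype_prod_eq_prod]

theorem integral_pow_Icc_of_le_three {n : ℕ} (hn : n ≤ 3) (s : ℝ) {δ : ℝ} (hδ : 0 ≤ δ) :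
    ∫ t in Icc (s - δ) (s + δ), t ^ n
      = 2 * δ * s ^ n + δ ^ 3 / 3 * (n.descFactorial 2 * s ^ (n - 2)) := by
  rw [integral_Icc_eq_integral_Ioc, ← intervalIntegral.integral_of_le (by linarith), integral_pow]
  interval_cases n <;> simp [Nat.descFactorial] <;> ring

theorem laplacianPi_monomial (m : Fin 2 → ℕ) (x : Fin 2 → ℝ) :
    laplacianPi (fun z => ∏ i, z i ^ m i) x
      = (m 0).descFactorial 2 * x 0 ^ (m 0 - 2) * x 1 ^ m 1
        + x 0 ^ m 0 * ((m 1).descFactorial 2 * x 1 ^ (m 1 - 2)) := by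
  simp only [Fin.prod_univ_two]
  rw [laplacianPi_mul_comp_eval (f := (· ^ m 0)) (g := (· ^ m 1)) (contDiff_id.pow _)
    (contDiff_id.pow _), iteratedDeriv_pow, iteratedDeriv_pow]

theorem setIntegral_pi_closedBall_monomial_sub {δ : ℝ} (hδ : 0 ≤ δ) (m : Fin 2 → ℕ)
    (hm : m 0 + m 1 ≤ 3) (x : Fin 2 → ℝ) :
    ∫ y in closedBall x δ, (∏ i, x i ^ m i - ∏ i, y i ^ m i)
      = -(2 * δ ^ 4 / 3) * laplacianPi (fun z => ∏ i, z i ^ m i) x := by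
  have hvol : volume.real (closedBall x δ) = (2 * δ) ^ 2 := by
    rw [measureReal_def, Real.volume_pi_closedBall x hδ, ENNReal.toReal_ofReal (by positivity),
      Fintype.card_fin]
  have hcross : ((m 0).descFactorial 2 * (m 1).descFactorial 2 : ℝ) = 0 := by
    norm_cast
    simp only [mul_eq_zero, Nat.descFactorial_eq_zero_iff_lt]
    omega
  have hint (f : (Fin 2 → ℝ) → ℝ) (hf : Continuous f) : IntegrableOn f (closedBall x δ) :=
    hf.locallyIntegrable.integrableOn_isCompact (isCompact_closedBall x δ)
  rw [integral_sub (hint _ continuous_const) (hint _ (by fun_prop)),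
    setIntegral_const, hvol, setIntegral_pi_closedBall_prod (fun i t => t ^ m i) x hδ,
    Fin.prod_univ_two, Fin.prod_univ_two, integral_pow_Icc_of_le_three (by omega) _ hδ,
    integral_pow_Icc_of_le_three (by omega) _ hδ, laplacianPi_monomial, smul_eq_mul]
  linear_combination (-δ ^ 6 / 9 * x 0 ^ (m 0 - 2) * x 1 ^ (m 1 - 2)) * hcross

theorem setIntegral_closedBall_eval_sub {δ : ℝ} (hδ : 0 ≤ δ) {p : MvPolynomial (Fin 2) ℝ}
    (hp : p.totalDegree ≤ 3) (x : Fin 2 → ℝ) :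
    ∫ y in closedBall x δ, (MvPolynomial.eval x p - MvPolynomial.eval y p)
      = -(2 * δ ^ 4 / 3) * laplacianPi (fun z => MvPolynomial.eval z p) x := by
  have hdeg (m : Fin 2 →₀ ℕ) (hm : m ∈ p.support) : m 0 + m 1 ≤ 3 := by
    have := (MvPolynomial.le_totalDegree hm).trans hp
    rwa [Finsupp.sum_fintype _ _ fun _ => rfl, Fin.sum_univ_two] at this
  simp only [MvPolynomial.eval_eq', ← Finset.sum_sub_distrib, ← mul_sub]
  rw [integral_finsetSum _ fun m _ =>
      (by fun_prop : Continuous _).locallyIntegrable.integrableOn_isCompact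
        (isCompact_closedBall x δ),
    laplacianPi_sum_const_mul _ _ (fun m _ => by fun_prop), Finset.mul_sum]
  refine Finset.sum_congr rfl fun m hm => ?_
  rw [integral_const_mul, setIntegral_pi_closedBall_monomial_sub hδ m (hdeg m hm)]
  ring

/-- the correctly scaled constant-kernel nonlocal diffusion operator with
infinity-norm ball truncation coincides with the classical negative Laplacian on
polynomials of degree up to three.  Here `dist` on `Fin 2 → ℝ` is the sup distance,
so `{y | dist y x ≤ δ}` is the infinity-norm ball `B_δ^∞(x)`. -/
theorem infinity_ball_on_cubics
    (δ : ℝ) (hδ : 0 < δ)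
    (c : ℝ) (hc : c = 3 / (4 * δ ^ 4))
    (p : MvPolynomial (Fin 2) ℝ) (hp : p.totalDegree ≤ 3)
    (u : (Fin 2 → ℝ) → ℝ)
    (hu : ∀ x, u x = MvPolynomial.eval x p)
    (x : Fin 2 → ℝ) :
    2 * c * ∫ y in {y : Fin 2 → ℝ | dist y x ≤ δ}, (u x - u y)
      = - laplacianPi u x := by
  obtain rfl : u = fun z => MvPolynomial.eval z p := funext hu
  change 2 * c * ∫ y in closedBall x δ, _ = _
  rw [setIntegral_closedBall_eval_sub hδ.le hp, hc]
  field_simp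
  ring
end

section
/- Let u : ℝ² → ℝ be twice continuously differentiable. Then for every x ∈ ℝ², lim_{δ→0⁺} (3/(2δ⁴)) ∫_{{y : |y−x|_∞ ≤ δ}} (u(x) − u(y)) dy = −Δu(x), i.e., the scaled constant-kernel nonlocal operator with infinity-norm ball truncation converges pointwise to the classical negative Laplacian as the horizon δ vanishes. -/
/-!
Translate the ball to the origin and expand `u (x + h) = u x + Du(x) h + ½ D²u(x) (h, h) + R h`
with `R h = o(‖h‖²)`. Over the box `[-δ, δ]²` the linear term integrates to zero by symmetry, the
mixed moments `∫ h₀ h₁` vanish and `∫ hᵢ² = (4/3) δ⁴`, so the quadratic term contributes exactly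
`(2/3) δ⁴ Δu(x)`, which the factor `3 / (2δ⁴)` normalises; the remainder integrates to
`o(δ²) · 4δ² = o(δ⁴)`.
-/

open MeasureTheory Filter

open Asymptotics Metric Set Topology

section Taylor

variable {E : Type*} [NormedAddCommGroup E] [NormedSpace ℝ E]

noncomputable def secondOrderRemainder (u : E → ℝ) (x h : E) : ℝ :=
  u (x + h) - u x - fderiv ℝ u x h - 1 / 2 * fderiv ℝ (fderiv ℝ u) x h h

variable {u : E → ℝ}

theorem hasFDerivAt_secondOrderRemainder (hu : ContDiff ℝ 2 u) (x h : E) :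
    HasFDerivAt (secondOrderRemainder u x)
      (fderiv ℝ u (x + h) - fderiv ℝ u x - fderiv ℝ (fderiv ℝ u) x h) h := by
  set B := fderiv ℝ (fderiv ℝ u) x
  have hsymm : ∀ v w, B v w = B w v := hu.contDiffAt.isSymmSndFDerivAt (by simp)
  have hshift : HasFDerivAt (fun h => u (x + h)) (fderiv ℝ u (x + h)) h :=
    (hasFDerivAt_comp_add_left x).2 (hu.differentiable (by simp) (x + h)).hasFDerivAt
  have hquad := (B.hasFDerivAt_of_bilinear (hasFDerivAt_id h) (hasFDerivAt_id h)).const_mul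
    (1 / 2 : ℝ)
  refine (((hshift.sub_const (u x)).sub (fderiv ℝ u x).hasFDerivAt).sub hquad).congr_fderiv ?_
  ext w
  simp [hsymm w h]
  ring

theorem isLittleO_secondOrderRemainder (hu : ContDiff ℝ 2 u) (x : E) :
    secondOrderRemainder u x =o[𝓝 0] fun h => ‖h‖ ^ 2 := by
  have hB : HasFDerivAt (fderiv ℝ u) (fderiv ℝ (fderiv ℝ u) x) x :=
    ((hu.fderiv_right (m := 1) le_rfl).differentiable one_ne_zero x).hasFDerivAt
  have hsmall := (hasFDerivAt_iff_isLittleO_nhds_zero.1 hB).norm_right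
  have hzero : secondOrderRemainder u x 0 = 0 := by simp [secondOrderRemainder]
  simpa [hzero] using convex_univ.isLittleO_pow_succ (mem_univ 0) (n := 1)
    (fun h _ => (hasFDerivAt_secondOrderRemainder hu x h).hasFDerivWithinAt)
    (by simpa using hsmall)

end Taylor

section SetIntegral

variable {E F : Type*} [NormedAddCommGroup E] [MeasurableSpace E]
  [NormedAddCommGroup F] [NormedSpace ℝ F] (μ : Measure E)

theorem Asymptotics.IsLittleO.setIntegral_closedBall [ProperSpace E]
    [IsFiniteMeasureOnCompacts μ] {g : E → F} {k : ℕ} (hg : g =o[𝓝 0] fun h => ‖h‖ ^ k) :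
    (fun δ => ∫ h in closedBall 0 δ, g h ∂μ) =o[𝓝[>] 0]
      fun δ => δ ^ k * μ.real (closedBall 0 δ) := by
  refine isLittleO_iff.2 fun c hc => ?_
  obtain ⟨r, hr, hball⟩ := Metric.eventually_nhds_iff_ball.1 (isLittleO_iff.1 hg hc)
  filter_upwards [Ioo_mem_nhdsGT hr] with δ ⟨hδ, hδr⟩
  have hbound : ∀ h ∈ closedBall (0 : E) δ, ‖g h‖ ≤ c * δ ^ k := fun h hh => by
    have hh' : ‖h‖ ≤ δ := mem_closedBall_zero_iff.1 hh
    calc ‖g h‖ ≤ c * ‖‖h‖ ^ k‖ := hball h (closedBall_subset_ball hδr hh)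
      _ ≤ c * δ ^ k := by rw [norm_pow, _root_.norm_norm]; gcongr
  calc ‖∫ h in closedBall 0 δ, g h ∂μ‖ ≤ c * δ ^ k * μ.real (closedBall 0 δ) :=
        norm_setIntegral_le_of_norm_le_const measure_closedBall_lt_top hbound
    _ = c * ‖δ ^ k * μ.real (closedBall 0 δ)‖ := by
        rw [Real.norm_of_nonneg (by positivity), mul_assoc]

theorem setIntegral_eq_zero_of_odd [MeasurableNeg E] [μ.IsNegInvariant] {s : Set E}
    (hs : -s = s) {f : E → F} (hf : f.Odd) : ∫ h in s, f h ∂μ = 0 := by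
  have hflip := (Measure.measurePreserving_neg μ).setIntegral_preimage_emb
    (MeasurableEquiv.neg E).measurableEmbedding f s
  rw [Set.neg_preimage, hs] at hflip
  simp only [hf _, integral_neg] at hflip
  have htwice : (2 : ℝ) • ∫ h in s, f h ∂μ = 0 := by
    rw [two_smul]
    nth_rewrite 1 [← hflip]
    exact neg_add_cancel _
  exact (smul_eq_zero.1 htwice).resolve_left two_ne_zero

theorem setIntegral_closedBall_comp_add_left [MeasurableAdd E] [μ.IsAddLeftInvariant]
    (f : E → F) (x : E) (δ : ℝ) :
    ∫ h in closedBall 0 δ, f (x + h) ∂μ = ∫ y in closedBall x δ, f y ∂μ := by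
  simpa [preimage_add_closedBall] using (measurePreserving_add_left μ x).setIntegral_preimage_emb
    (MeasurableEquiv.addLeft x).measurableEmbedding f (closedBall x δ)

end SetIntegral

section Box

variable {ι : Type*} [Fintype ι] {δ : ℝ}

theorem volume_restrict_closedBall_zero_pi (hδ : 0 ≤ δ) :
    (volume : Measure (ι → ℝ)).restrict (closedBall 0 δ) =
      Measure.pi fun _ => volume.restrict (Icc (-δ) δ) := by
  rw [closedBall_pi _ hδ, volume_pi, Measure.restrict_pi_pi]
  simp [Real.closedBall_eq_Icc]

variable [DecidableEq ι]

theorem integral_closedBall_zero_apply_mul_apply (hδ : 0 ≤ δ) (i j : ι) :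
    ∫ h in closedBall (0 : ι → ℝ) δ, h i * h j =
      if i = j then 2 / 3 * δ ^ 3 * (2 * δ) ^ (Fintype.card ι - 1) else 0 := by
  -- a product of one-variable factors, so that the integral over the box factorises
  have hprod : ∀ h : ι → ℝ,
      h i * h j = ∏ k, (if k = i then h k else 1) * (if k = j then h k else 1) := fun h => by
    rw [Finset.prod_mul_distrib, Fintype.prod_ite_eq', Fintype.prod_ite_eq']
  simp_rw [hprod]
  rw [volume_restrict_closedBall_zero_pi hδ, integral_fintype_prod_eq_prod
    (f := fun k t => (if k = i then t else 1) * (if k = j then t else 1))]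
  split_ifs with hij
  · subst hij
    have hsq : ∫ t in Icc (-δ) δ, t * t = 2 / 3 * δ ^ 3 := by
      rw [integral_Icc_eq_integral_Ioc, ← intervalIntegral.integral_of_le (by linarith)]
      simp [← sq]
      ring
    have hone : ∫ _ in Icc (-δ) δ, (1 : ℝ) = 2 * δ := by
      simp [hδ]
      ring
    have hfactor : ∀ k, ∫ t in Icc (-δ) δ, (if k = i then t else 1) * (if k = i then t else 1) =
        if k = i then 2 / 3 * δ ^ 3 else 2 * δ := fun k => by
      split_ifs <;> simp only [mul_one, hsq, hone]
    rw [Finset.prod_congr rfl fun k _ => hfactor k, Fintype.prod_eq_mul_prod_compl i, if_pos rfl,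
      Finset.prod_congr rfl fun k hk => if_neg (by simpa using hk),
      Finset.prod_const, Finset.card_compl, Finset.card_singleton]
  · have hodd : ∫ t in Icc (-δ) δ, t = 0 :=
      setIntegral_eq_zero_of_odd volume (by rw [neg_Icc, neg_neg]) (f := id) fun _ => rfl
    refine Finset.prod_eq_zero (Finset.mem_univ i) ?_
    simpa [hij] using hodd

theorem ContinuousLinearMap.apply_apply_self_eq_sum (B : (ι → ℝ) →L[ℝ] (ι → ℝ) →L[ℝ] ℝ)
    (h : ι → ℝ) : B h h = ∑ i, ∑ j, h i * h j * B (Pi.single i 1) (Pi.single j 1) := by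
  have hsingle : ∀ i, (Pi.single i (h i) : ι → ℝ) = h i • Pi.single i 1 := fun i => by
    rw [← Pi.single_smul', smul_eq_mul, mul_one]
  conv_lhs => rw [← Finset.univ_sum_single h]
  simp only [hsingle, map_sum, map_smul, sum_apply, smul_apply, smul_eq_mul, Finset.mul_sum]
  rw [Finset.sum_comm]
  exact Finset.sum_congr rfl fun i _ => Finset.sum_congr rfl fun j _ => by ring

theorem integral_closedBall_zero_apply_apply_self (hδ : 0 ≤ δ)
    (B : (ι → ℝ) →L[ℝ] (ι → ℝ) →L[ℝ] ℝ) :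
    ∫ h in closedBall (0 : ι → ℝ) δ, B h h =
      2 / 3 * δ ^ 3 * (2 * δ) ^ (Fintype.card ι - 1) * ∑ i, B (Pi.single i 1) (Pi.single i 1) := by
  have hint : ∀ F : (ι → ℝ) → ℝ, Continuous F → IntegrableOn F (closedBall 0 δ) := fun F hF =>
    hF.continuousOn.integrableOn_compact (isCompact_closedBall 0 δ)
  have hrow : ∀ i, ∫ h in closedBall (0 : ι → ℝ) δ,
      ∑ j, h i * h j * B (Pi.single i 1) (Pi.single j 1) =
        2 / 3 * δ ^ 3 * (2 * δ) ^ (Fintype.card ι - 1) * B (Pi.single i 1) (Pi.single i 1) :=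
    fun i => by
      rw [integral_finsetSum _ fun j _ => hint _ (by fun_prop)]
      simp [integral_mul_const, integral_closedBall_zero_apply_mul_apply hδ]
  conv_lhs => simp only [B.apply_apply_self_eq_sum]
  rw [integral_finsetSum _ fun i _ => hint _ (by fun_prop), Finset.mul_sum]
  exact Finset.sum_congr rfl fun i _ => hrow i

end Box

theorem laplacianPi_eq_sum {u : (Fin 2 → ℝ) → ℝ} (hu : ContDiff ℝ 2 u) (x : Fin 2 → ℝ) :
    laplacianPi u x = ∑ i, fderiv ℝ (fderiv ℝ u) x (Pi.single i 1) (Pi.single i 1) := by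
  have hdiff : DifferentiableAt ℝ (fderiv ℝ u) x :=
    (hu.fderiv_right (m := 1) le_rfl).differentiable one_ne_zero x
  simp [laplacianPi, fderiv_clm_apply hdiff (differentiableAt_const _)]

theorem setIntegral_closedBall_sub_eq {ι : Type*} [Fintype ι] [DecidableEq ι]
    {u : (ι → ℝ) → ℝ} (hu : ContDiff ℝ 2 u) (x : ι → ℝ) {δ : ℝ} (hδ : 0 ≤ δ) :
    ∫ y in closedBall x δ, (u x - u y) =
      -(1 / 3 * δ ^ 3 * (2 * δ) ^ (Fintype.card ι - 1)) *
          ∑ i, fderiv ℝ (fderiv ℝ u) x (Pi.single i 1) (Pi.single i 1) -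
        ∫ h in closedBall 0 δ, secondOrderRemainder u x h := by
  set B := fderiv ℝ (fderiv ℝ u) x
  have hint : ∀ F : (ι → ℝ) → ℝ, Continuous F → IntegrableOn F (closedBall 0 δ) := fun F hF =>
    hF.continuousOn.integrableOn_compact (isCompact_closedBall 0 δ)
  have hR : Continuous (secondOrderRemainder u x) := continuous_iff_continuousAt.2 fun h =>
    (hasFDerivAt_secondOrderRemainder hu x h).continuousAt
  have hexpand : ∀ h, u x - u (x + h) =
      -fderiv ℝ u x h - 1 / 2 * B h h - secondOrderRemainder u x h := fun h => by
    rw [secondOrderRemainder]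
    ring
  rw [← setIntegral_closedBall_comp_add_left]
  simp_rw [hexpand]
  rw [integral_sub (hint _ (by fun_prop)) (hint _ hR), integral_sub (hint _ (by fun_prop))
    (hint _ (by fun_prop)), integral_neg, integral_const_mul,
    setIntegral_eq_zero_of_odd volume (by simp) (map_neg _),
    integral_closedBall_zero_apply_apply_self hδ]
  ring

/-- for `u ∈ C²`, the scaled constant-kernel nonlocal operator with
infinity-norm ball truncation converges pointwise to the classical negative Laplacian
as the horizon `δ → 0⁺`.  Here `dist` on `Fin 2 → ℝ` is the sup distance, so
`{y | dist y x ≤ δ}` is the infinity-norm ball `B_δ^∞(x)`. -/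
theorem infinity_ball_local_limit
    (u : (Fin 2 → ℝ) → ℝ) (hu : ContDiff ℝ 2 u) (x : Fin 2 → ℝ) :
    Tendsto (fun δ : ℝ =>
        3 / (2 * δ ^ 4) * ∫ y in {y : Fin 2 → ℝ | dist y x ≤ δ}, (u x - u y))
      (nhdsWithin 0 (Set.Ioi 0)) (nhds (- laplacianPi u x)) := by
  set I := fun δ => ∫ h in closedBall (0 : Fin 2 → ℝ) δ, secondOrderRemainder u x h with hI_def
  have hvolume : ∀ δ > 0, δ ^ 2 * volume.real (closedBall (0 : Fin 2 → ℝ) δ) = 4 * δ ^ 4 :=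
    fun δ hδ => by
      rw [measureReal_def, Real.volume_pi_closedBall _ hδ.le, ENNReal.toReal_ofReal (by positivity)]
      simp
      ring
  have hI : Tendsto (fun δ => I δ / (4 * δ ^ 4)) (𝓝[>] 0) (𝓝 0) :=
    (((isLittleO_secondOrderRemainder hu x).setIntegral_closedBall volume).congr' .rfl
      (eventually_nhdsWithin_of_forall hvolume)).tendsto_div_nhds_zero
  have hvalue : ∀ δ > 0, 3 / (2 * δ ^ 4) * ∫ y in {y | dist y x ≤ δ}, (u x - u y) =
      -laplacianPi u x - 6 * (I δ / (4 * δ ^ 4)) := fun δ hδ => by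
    rw [← closedBall, setIntegral_closedBall_sub_eq hu x hδ.le, laplacianPi_eq_sum hu,
      Fintype.card_fin, hI_def]
    field_simp
    ring
  have hlim := (tendsto_const_nhds (x := -laplacianPi u x)).sub (hI.const_mul 6)
  rw [mul_zero, sub_zero] at hlim
  exact hlim.congr' (eventually_nhdsWithin_of_forall fun δ hδ => (hvalue δ hδ).symm)
end
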